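/- For every α with -1/2 < α < 0 there exists z < 0 such that |R(z)| > 1, where R(z) = (-(α+2)z² - (2α²+2)z - 2α) / ((2α²-2α)z² + (-2α²+2α-2)z - 2α). Concretely, R(z*) = -1 for z* = (2α² - α + 2 + √(4α⁴ + 4α³ - 3α² - 12α + 4)) / (2α² - 3α - 2), and |R(z)| > 1 for z < z*. -/

import Mathlib

/-!
Since `R = N / Q` with `Q > 0` on `(-∞, 0)`, the sign of `R + 1` there is the sign of the
quadratic `N + Q = a z² - 2 b z + c` with `a = (2α + 1)(α - 2) < 0`, `b = 2α² - α + 2`,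
`c = -4α`, whose reduced discriminant `b² - a c` is the radicand in `z*`. Hence `z*` is the
smaller root of `N + Q`, so `R z* = -1`, and `N + Q < 0` to the left of it, i.e. `R < -1`.
-/

open Real

theorem mul_quadratic_eq_sq_sub (a b c z : ℝ) :
    a * (a * z ^ 2 - 2 * b * z + c) = (a * z - b) ^ 2 - (b ^ 2 - a * c) := by
  ring

theorem quadratic_eq_zero_at_root {a b c : ℝ} (ha : a ≠ 0) (hd : 0 ≤ b ^ 2 - a * c) :
    a * ((b + √(b ^ 2 - a * c)) / a) ^ 2 - 2 * b * ((b + √(b ^ 2 - a * c)) / a) + c = 0 := by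
  have h := mul_quadratic_eq_sq_sub a b c ((b + √(b ^ 2 - a * c)) / a)
  rw [mul_div_cancel₀ _ ha, add_sub_cancel_left, sq_sqrt hd, sub_self] at h
  exact (mul_eq_zero.mp h).resolve_left ha

theorem quadratic_neg_of_lt_root {a b c z : ℝ} (ha : a < 0) (hd : 0 ≤ b ^ 2 - a * c)
    (hz : z < (b + √(b ^ 2 - a * c)) / a) : a * z ^ 2 - 2 * b * z + c < 0 := by
  have hs : b + √(b ^ 2 - a * c) < a * z := by
    linarith [(lt_div_iff_of_neg ha).mp hz]
  have hsq : b ^ 2 - a * c < (a * z - b) ^ 2 := by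
    rw [← sq_sqrt hd]
    exact pow_lt_pow_left₀ (by linarith) (sqrt_nonneg _) two_ne_zero
  refine neg_of_mul_pos_right ?_ ha.le
  rw [mul_quadratic_eq_sq_sub]
  linarith

namespace MPRK22

noncomputable section

def num (α z : ℝ) : ℝ := -(α+2)*z^2 - (2*α^2+2)*z - 2*α

def den (α z : ℝ) : ℝ := (2*α^2-2*α)*z^2 + (-2*α^2+2*α-2)*z - 2*α

def stability (α z : ℝ) : ℝ := num α z / den α z

def negOneRoot (α : ℝ) : ℝ :=
  (2*α^2 - α + 2 + √(4*α^4 + 4*α^3 - 3*α^2 - 12*α + 4)) / (2*α^2 - 3*α - 2)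

theorem den_pos {α z : ℝ} (hα : α < 0) (hz : z < 0) : 0 < den α z := by
  have h₂ : 0 < (2*α^2-2*α)*z^2 := by
    have : 0 < 2*α^2-2*α := by nlinarith
    exact mul_pos this (sq_pos_of_neg hz)
  have h₁ : 0 < (-2*α^2+2*α-2)*z := mul_pos_of_neg_of_neg (by nlinarith) hz
  unfold den
  linarith

theorem num_add_den (α z : ℝ) :
    num α z + den α z = (2*α^2 - 3*α - 2) * z ^ 2 - 2 * (2*α^2 - α + 2) * z + -4*α := by
  unfold num den
  ring

theorem negOneRoot_eq_quadratic_root (α : ℝ) : negOneRoot α =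
    (2*α^2 - α + 2 + √((2*α^2 - α + 2) ^ 2 - (2*α^2 - 3*α - 2) * (-4*α))) /
      (2*α^2 - 3*α - 2) := by
  rw [negOneRoot]
  congr 3
  ring

variable {α : ℝ} (hα₁ : -(1/2) < α) (hα₂ : α < 0)
include hα₁ hα₂

theorem leading_coeff_neg : 2*α^2 - 3*α - 2 < 0 := by
  rw [show 2*α^2 - 3*α - 2 = (2*α + 1) * (α - 2) by ring]
  exact mul_neg_of_pos_of_neg (by linarith) (by linarith)

theorem disc_nonneg : 0 ≤ (2*α^2 - α + 2) ^ 2 - (2*α^2 - 3*α - 2) * (-4*α) := by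
  nlinarith [leading_coeff_neg hα₁ hα₂]

theorem negOneRoot_neg : negOneRoot α < 0 := by
  have hb : 0 < 2*α^2 - α + 2 + √(4*α^4 + 4*α^3 - 3*α^2 - 12*α + 4) := by
    nlinarith [sqrt_nonneg (4*α^4 + 4*α^3 - 3*α^2 - 12*α + 4)]
  exact div_neg_of_pos_of_neg hb (leading_coeff_neg hα₁ hα₂)

theorem stability_negOneRoot : stability α (negOneRoot α) = -1 := by
  have hQ := den_pos hα₂ (negOneRoot_neg hα₁ hα₂)
  have hsum : num α (negOneRoot α) + den α (negOneRoot α) = 0 := by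
    rw [num_add_den, negOneRoot_eq_quadratic_root]
    exact quadratic_eq_zero_at_root (leading_coeff_neg hα₁ hα₂).ne (disc_nonneg hα₁ hα₂)
  rw [stability, div_eq_iff hQ.ne']
  linarith

theorem stability_lt_neg_one {z : ℝ} (hz : z < negOneRoot α) : stability α z < -1 := by
  have hQ := den_pos hα₂ (hz.trans (negOneRoot_neg hα₁ hα₂))
  have hsum : num α z + den α z < 0 := by
    rw [num_add_den]
    rw [negOneRoot_eq_quadratic_root] at hz
    exact quadratic_neg_of_lt_root (leading_coeff_neg hα₁ hα₂) (disc_nonneg hα₁ hα₂) hz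
  rw [stability, div_lt_iff₀ hQ]
  linarith

theorem one_lt_abs_stability {z : ℝ} (hz : z < negOneRoot α) : 1 < |stability α z| := by
  have h := stability_lt_neg_one hα₁ hα₂ hz
  rw [abs_of_neg (by linarith)]
  linarith

end

end MPRK22

theorem mprk22_neg_half_lt_alpha_conditional (α : ℝ) (hα₁ : -(1/2) < α) (hα₂ : α < 0)
    (R : ℝ → ℝ)
    (hR : ∀ z, R z = (-(α+2)*z^2 - (2*α^2+2)*z - 2*α) /
      ((2*α^2-2*α)*z^2 + (-2*α^2+2*α-2)*z - 2*α)) :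
    (∃ z < 0, 1 < |R z|) ∧
    R ((2*α^2 - α + 2 + Real.sqrt (4*α^4 + 4*α^3 - 3*α^2 - 12*α + 4)) /
        (2*α^2 - 3*α - 2)) = -1 ∧
    ∀ z < (2*α^2 - α + 2 + Real.sqrt (4*α^4 + 4*α^3 - 3*α^2 - 12*α + 4)) /
        (2*α^2 - 3*α - 2), 1 < |R z| := by
  obtain rfl : R = MPRK22.stability α := funext hR
  have hroot := MPRK22.negOneRoot_neg hα₁ hα₂
  exact ⟨⟨MPRK22.negOneRoot α - 1, by linarith,
      MPRK22.one_lt_abs_stability hα₁ hα₂ (by linarith)⟩,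
    MPRK22.stability_negOneRoot hα₁ hα₂, fun z hz => MPRK22.one_lt_abs_stability hα₁ hα₂ hz⟩
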